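/- Define R_p(k,l,i_1,...,i_m) as the coefficient of ℏ^p in Π_{j=1}^m Π_{γ=0}^{k−i_j−1} (1 + ℏ(l − i_{j+1} − ... − i_m + γ + 1/2)). Then R_p is a polynomial in k, l, i_1, ..., i_m of total degree at most 2p, and R_p(k,l,0,...,0) is divisible by k (as a polynomial in k and l) for p ≥ 1. -/

import Mathlib

/-- `R(ℏ;k,l,i₁,…,i_m) = ∏_{j=1}^m ∏_{γ=0}^{k−i_j−1} (1 + ℏ(l − i_{j+1} − … − i_m + γ + 1/2))`,
as a polynomial in the formal parameter `ℏ`. -/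
noncomputable def Rpoly (m k : ℕ) (l : ℝ) (i : Fin m → ℕ) : Polynomial ℝ :=
  ∏ j : Fin m, ∏ γ ∈ Finset.range (k - i j),
    (Polynomial.C (l - (∑ j' ∈ Finset.univ.filter (fun j' => j < j'), (i j' : ℝ))
        + (γ : ℝ) + 1 / 2) * Polynomial.X + 1)

open MvPolynomial Finset Polynomial

open MvPolynomial Finset Polynomial

/-- Lemma A: sum of d-th powers is a polynomial in n, divisible by n, of degree ≤ d+1. -/
lemma lemA (d : ℕ) : ∃ T : MvPolynomial (Fin 2) ℝ, T.totalDegree ≤ d + 1 ∧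
    (MvPolynomial.X 0 ∣ T) ∧
    ∀ (n : ℕ) (a : ℝ), MvPolynomial.eval ![(n : ℝ), a] T = ∑ t ∈ Finset.range n, (t : ℝ) ^ d := by
  refine ⟨∑ i ∈ Finset.range (d + 1),
      MvPolynomial.C ((_root_.bernoulli i * (d + 1).choose i / (d + 1) : ℚ) : ℝ) *
        MvPolynomial.X 0 ^ (d + 1 - i), ?_, ?_, ?_⟩
  · refine (MvPolynomial.totalDegree_finset_sum _ _).trans ?_
    apply Finset.sup_le
    intro i hi
    refine (MvPolynomial.totalDegree_mul _ _).trans ?_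
    simp only [MvPolynomial.totalDegree_C, zero_add]
    exact (MvPolynomial.totalDegree_pow _ _).trans (by simp [MvPolynomial.totalDegree_X])
  · apply Finset.dvd_sum
    intro i hi
    have h1 : 1 ≤ d + 1 - i := by simp at hi; omega
    exact Dvd.dvd.mul_left (dvd_pow_self _ (by omega)) _
  · intro n a
    have := sum_range_pow n d
    have hcast : (∑ t ∈ Finset.range n, (t : ℝ) ^ d)
        = ((∑ t ∈ Finset.range n, (t : ℚ) ^ d : ℚ) : ℝ) := by push_cast; ring
    rw [hcast, this]
    push_cast
    rw [map_sum]
    apply Finset.sum_congr rfl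
    intro i _
    simp [MvPolynomial.eval_C]
    push_cast
    ring


/-- Summation lemma: discrete antiderivative of a 2-variable polynomial. -/
lemma lemS (Q : MvPolynomial (Fin 2) ℝ) : ∃ S : MvPolynomial (Fin 2) ℝ,
    S.totalDegree ≤ Q.totalDegree + 1 ∧ (MvPolynomial.X 0 ∣ S) ∧
    ∀ (n : ℕ) (a : ℝ), MvPolynomial.eval ![(n : ℝ), a] S
      = ∑ t ∈ Finset.range n, MvPolynomial.eval ![(t : ℝ), a] Q := by
  choose T hT1 hT2 hT3 using lemA
  refine ⟨∑ d ∈ Q.support, MvPolynomial.C (Q.coeff d) * T (d 0) * MvPolynomial.X 1 ^ (d 1),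
    ?_, ?_, ?_⟩
  · refine (MvPolynomial.totalDegree_finset_sum _ _).trans (Finset.sup_le fun d hd => ?_)
    have hdeg : d 0 + d 1 ≤ Q.totalDegree := by
      have := MvPolynomial.le_totalDegree hd
      rwa [show (d.sum fun _ e => e) = d 0 + d 1 by
        rw [Finsupp.sum_fintype] <;> simp [Fin.sum_univ_two]] at this
    refine (MvPolynomial.totalDegree_mul _ _).trans ?_
    have h1 := (MvPolynomial.totalDegree_mul (MvPolynomial.C (Q.coeff d)) (T (d 0)))
    have h2 := hT1 (d 0)
    have h3 := (MvPolynomial.totalDegree_pow (MvPolynomial.X (1 : Fin 2)) (d 1)).trans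
      (by rw [MvPolynomial.totalDegree_X (R := ℝ)]; simp : d 1 * (MvPolynomial.X (1 : Fin 2)).totalDegree ≤ d 1)
    simp only [MvPolynomial.totalDegree_C, zero_add] at h1
    omega
  · exact Finset.dvd_sum fun d _ => Dvd.dvd.mul_right (Dvd.dvd.mul_left (hT2 (d 0)) _) _
  · intro n a
    rw [map_sum]
    have : ∀ t : ℕ, MvPolynomial.eval ![(t : ℝ), a] Q
        = ∑ d ∈ Q.support, Q.coeff d * ((t : ℝ) ^ (d 0) * a ^ (d 1)) := by
      intro t
      rw [MvPolynomial.eval_eq']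
      exact Finset.sum_congr rfl fun d _ => by rw [Fin.prod_univ_two]; simp
    simp only [this]
    rw [Finset.sum_comm]
    apply Finset.sum_congr rfl
    intro d _
    simp only [map_mul, MvPolynomial.eval_C, map_pow, MvPolynomial.eval_X]
    rw [hT3 (d 0) n a]
    simp only [Matrix.cons_val_one, Matrix.head_cons]
    rw [Finset.mul_sum, Finset.sum_mul]
    exact Finset.sum_congr rfl fun t _ => by simp only [Matrix.cons_val_zero]; ring


noncomputable def Pb (n : ℕ) (a : ℝ) : Polynomial ℝ :=
  ∏ γ ∈ Finset.range n, (Polynomial.C (a + γ) * Polynomial.X + 1)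

lemma lemB (q : ℕ) : ∃ E : MvPolynomial (Fin 2) ℝ, E.totalDegree ≤ 2 * q ∧
    (1 ≤ q → MvPolynomial.X 0 ∣ E) ∧
    ∀ (n : ℕ) (a : ℝ), (Pb n a).coeff q = MvPolynomial.eval ![(n : ℝ), a] E := by
  induction q with
  | zero =>
    refine ⟨1, by simp, by omega, fun n a => ?_⟩
    rw [Polynomial.coeff_zero_eq_eval_zero]
    simp [Pb, Polynomial.eval_prod]
  | succ q ih =>
    obtain ⟨E, hE1, _, hE3⟩ := ih
    obtain ⟨S, hS1, hS2, hS3⟩ := lemS ((MvPolynomial.X 1 + MvPolynomial.X 0) * E)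
    refine ⟨S, ?_, fun _ => hS2, ?_⟩
    · refine hS1.trans ?_
      have h1 := MvPolynomial.totalDegree_mul
        (MvPolynomial.X (1 : Fin 2) + MvPolynomial.X 0) (R := ℝ) E
      have h2 := (MvPolynomial.totalDegree_add (MvPolynomial.X (1 : Fin 2)) (MvPolynomial.X 0 : MvPolynomial (Fin 2) ℝ))
      rw [MvPolynomial.totalDegree_X, MvPolynomial.totalDegree_X] at h2
      simp only [max_self] at h2
      omega
    · intro n a
      rw [hS3]
      induction n with
      | zero => simp [Pb, Polynomial.coeff_one]
      | succ n ihn =>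
        have hstep : Pb (n + 1) a = Pb n a * (Polynomial.C (a + n) * Polynomial.X + 1) := by
          rw [Pb, Finset.prod_range_succ]; rfl
        have hco : (Pb (n + 1) a).coeff (q + 1)
            = (Pb n a).coeff (q + 1) + (a + n) * (Pb n a).coeff q := by
          rw [hstep, mul_add, mul_one, Polynomial.coeff_add,
            show Pb n a * (Polynomial.C (a + (n : ℝ)) * Polynomial.X)
              = Polynomial.C (a + (n : ℝ)) * (Polynomial.X * Pb n a) by ring,
            Polynomial.coeff_C_mul, Polynomial.coeff_X_mul]
          ring
        rw [hco, ihn, Finset.sum_range_succ, hE3]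
        simp only [map_mul, map_add, MvPolynomial.eval_X, Matrix.cons_val_one,
          Matrix.head_cons, Matrix.cons_val_zero]
        try ring


lemma tdeg_bind₁ {n n' : ℕ} (f : Fin n → MvPolynomial (Fin n') ℝ)
    (hf : ∀ v, (f v).totalDegree ≤ 1) (p : MvPolynomial (Fin n) ℝ) :
    (MvPolynomial.bind₁ f p).totalDegree ≤ p.totalDegree := by
  conv_lhs => rw [p.as_sum]
  rw [map_sum]
  refine (MvPolynomial.totalDegree_finset_sum _ _).trans (Finset.sup_le fun d hd => ?_)
  rw [MvPolynomial.bind₁_monomial]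
  refine (MvPolynomial.totalDegree_mul _ _).trans ?_
  rw [MvPolynomial.totalDegree_C, zero_add]
  have hle : (∏ v ∈ d.support, f v ^ d v).totalDegree ≤ ∑ v ∈ d.support, d v := by
    refine (MvPolynomial.totalDegree_finset_prod _ _).trans ?_
    refine Finset.sum_le_sum fun v _ => ?_
    refine (MvPolynomial.totalDegree_pow _ _).trans ?_
    calc d v * (f v).totalDegree ≤ d v * 1 := Nat.mul_le_mul_left _ (hf v)
    _ = d v := by ring
  refine hle.trans ?_
  have := MvPolynomial.le_totalDegree hd
  rwa [show (d.sum fun _ e => e) = ∑ v ∈ d.support, d v from rfl] at this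

/-- Generic lemma: coefficients of a finite product of polynomials whose coefficients
are polynomial, with degree bound and ideal membership tracked. -/
lemma keyProd {ι A : Type*} {n : ℕ} (x : A → Fin n → ℝ) (V : A → Prop)
    (f : ι → A → Polynomial ℝ) (I : Ideal (MvPolynomial (Fin n) ℝ)) (s : Finset ι)
    (h : ∀ j ∈ s, ∀ q : ℕ, ∃ E : MvPolynomial (Fin n) ℝ, E.totalDegree ≤ 2 * q ∧
      (1 ≤ q → E ∈ I) ∧ ∀ a, V a → (f j a).coeff q = MvPolynomial.eval (x a) E) :
    ∀ p : ℕ, ∃ Q : MvPolynomial (Fin n) ℝ, Q.totalDegree ≤ 2 * p ∧ (1 ≤ p → Q ∈ I) ∧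
      ∀ a, V a → (∏ j ∈ s, f j a).coeff p = MvPolynomial.eval (x a) Q := by
  classical
  induction s using Finset.induction with
  | empty =>
    intro p
    match p with
    | 0 => exact ⟨1, by simp, by omega, fun a _ => by simp⟩
    | p + 1 => exact ⟨0, by simp, fun _ => I.zero_mem, fun a _ => by
        simp [Polynomial.coeff_one]⟩
  | @insert j s' hns ih =>
    have ihs := ih (fun j' hj' => h j' (Finset.mem_insert_of_mem hj'))
    have hj := h j (Finset.mem_insert_self j s')
    intro p
    choose E hE1 hE2 hE3 using hj
    choose Q hQ1 hQ2 hQ3 using ihs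
    refine ⟨∑ uv ∈ Finset.HasAntidiagonal.antidiagonal p, E uv.1 * Q uv.2, ?_, ?_, ?_⟩
    · refine (MvPolynomial.totalDegree_finset_sum _ _).trans (Finset.sup_le fun uv huv => ?_)
      have := Finset.HasAntidiagonal.mem_antidiagonal.mp huv
      have := (MvPolynomial.totalDegree_mul (E uv.1) (Q uv.2))
      have := hE1 uv.1
      have := hQ1 uv.2
      omega
    · intro hp
      refine Ideal.sum_mem _ fun uv huv => ?_
      have hsum := Finset.HasAntidiagonal.mem_antidiagonal.mp huv
      rcases Nat.lt_or_ge 0 uv.1 with h1 | h1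
      · exact I.mul_mem_right _ (hE2 uv.1 h1)
      · exact I.mul_mem_left _ (hQ2 uv.2 (by omega))
    · intro a ha
      rw [Finset.prod_insert hns, Polynomial.coeff_mul, map_sum]
      exact Finset.sum_congr rfl fun uv _ => by
        rw [hE3 uv.1 a ha, hQ3 uv.2 a ha, map_mul]

lemma block1 {m : ℕ} (j : Fin m) (q : ℕ) :
    ∃ E' : MvPolynomial (Fin (m + 2)) ℝ, E'.totalDegree ≤ 2 * q ∧
      ∀ (k : ℕ) (l : ℝ) (i : Fin m → ℕ), (∀ j', i j' ≤ k) →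
        (∏ γ ∈ Finset.range (k - i j),
          (Polynomial.C (l - (∑ j' ∈ Finset.univ.filter (fun j' => j < j'), (i j' : ℝ))
            + (γ : ℝ) + 1 / 2) * Polynomial.X + 1)).coeff q
        = MvPolynomial.eval (Fin.cons (k : ℝ) (Fin.cons l fun j' => (i j' : ℝ))) E' := by
  obtain ⟨E, hE1, -, hE3⟩ := lemB q
  set σf : Fin 2 → MvPolynomial (Fin (m + 2)) ℝ :=
    ![MvPolynomial.X 0 - MvPolynomial.X j.succ.succ,
      MvPolynomial.X 1 - (∑ j' ∈ Finset.univ.filter (fun j' => j < j'),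
        MvPolynomial.X j'.succ.succ) + MvPolynomial.C (1 / 2)] with hσf
  refine ⟨MvPolynomial.bind₁ σf E, ?_, ?_⟩
  · refine (tdeg_bind₁ σf ?_ E).trans hE1
    intro v
    fin_cases v
    · refine (MvPolynomial.totalDegree_sub _ _).trans ?_
      simp [MvPolynomial.totalDegree_X]
    · refine (MvPolynomial.totalDegree_add _ _).trans ?_
      refine max_le ((MvPolynomial.totalDegree_sub _ _).trans ?_) (by simp)
      refine max_le (by simp [MvPolynomial.totalDegree_X]) ?_
      refine (MvPolynomial.totalDegree_finset_sum _ _).trans ?_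
      exact Finset.sup_le fun j' _ => by simp [MvPolynomial.totalDegree_X]
  · intro k l i hki
    set xv : Fin (m + 2) → ℝ := Fin.cons (k : ℝ) (Fin.cons l fun j' => (i j' : ℝ)) with hxv
    set S : ℝ := ∑ j' ∈ Finset.univ.filter (fun j' => j < j'), (i j' : ℝ) with hS
    have hprod : (∏ γ ∈ Finset.range (k - i j),
        (Polynomial.C (l - S + (γ : ℝ) + 1 / 2) * Polynomial.X + 1))
        = Pb (k - i j) (l - S + 1 / 2) := by
      refine Finset.prod_congr rfl fun γ _ => ?_
      rw [show l - S + (γ : ℝ) + 1 / 2 = l - S + 1 / 2 + (γ : ℝ) by ring]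
    rw [hprod, hE3]
    have hbind : MvPolynomial.eval xv (MvPolynomial.bind₁ σf E)
        = MvPolynomial.eval (fun v => MvPolynomial.eval xv (σf v)) E :=
      MvPolynomial.eval₂Hom_bind₁ (RingHom.id ℝ) xv σf E
    have hx0 : xv 0 = (k : ℝ) := by rw [hxv]; simp
    have hx1 : xv 1 = l := by
      rw [hxv, show (1 : Fin (m + 2)) = Fin.succ 0 from (Fin.succ_zero_eq_one).symm,
        Fin.cons_succ, Fin.cons_zero]
    have hxj : ∀ j' : Fin m, xv j'.succ.succ = (i j' : ℝ) := by
      intro j'; rw [hxv, Fin.cons_succ, Fin.cons_succ]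
    have hvec : (fun v => MvPolynomial.eval xv (σf v))
        = ![((k - i j : ℕ) : ℝ), l - S + 1 / 2] := by
      funext v
      fin_cases v
      · show MvPolynomial.eval xv (σf 0) = _
        rw [hσf]
        simp only [Matrix.cons_val_zero, map_sub, MvPolynomial.eval_X, hx0, hxj]
        rw [show ((k - i j : ℕ) : ℝ) = (k : ℝ) - (i j : ℝ) from Nat.cast_sub (hki j)]
        simp
      · show MvPolynomial.eval xv (σf 1) = _
        rw [hσf]
        simp only [Matrix.cons_val_one, Matrix.head_cons, map_add, map_sub, map_sum,
          MvPolynomial.eval_X, MvPolynomial.eval_C, hx1, hxj]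
        show _ = ![((k - i j : ℕ) : ℝ), l - S + 1 / 2] 1
        simp [hS, hx1, hxj]
    rw [hbind, hvec]

lemma block2 {m : ℕ} (j : Fin m) (q : ℕ) :
    ∃ E' : MvPolynomial (Fin 2) ℝ, E'.totalDegree ≤ 2 * q ∧
      (1 ≤ q → E' ∈ Ideal.span {(MvPolynomial.X 0 : MvPolynomial (Fin 2) ℝ)}) ∧
      ∀ (k : ℕ) (l : ℝ),
        (∏ γ ∈ Finset.range (k - (fun _ : Fin m => 0) j),
          (Polynomial.C (l - (∑ j' ∈ Finset.univ.filter (fun j' => j < j'),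
              (((fun _ : Fin m => 0) j' : ℕ) : ℝ)) + (γ : ℝ) + 1 / 2) * Polynomial.X + 1)).coeff q
        = MvPolynomial.eval ![(k : ℝ), l] E' := by
  obtain ⟨E, hE1, hE2, hE3⟩ := lemB q
  set τ : Fin 2 → MvPolynomial (Fin 2) ℝ :=
    ![MvPolynomial.X 0, MvPolynomial.X 1 + MvPolynomial.C (1 / 2)] with hτ
  refine ⟨MvPolynomial.bind₁ τ E, ?_, ?_, ?_⟩
  · refine (tdeg_bind₁ τ ?_ E).trans hE1
    intro v
    fin_cases v
    · simp [hτ, MvPolynomial.totalDegree_X]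
    · simp only [hτ, Matrix.cons_val_one, Matrix.head_cons]
      refine (MvPolynomial.totalDegree_add _ _).trans ?_
      simp [MvPolynomial.totalDegree_X]
  · intro hq
    rw [Ideal.mem_span_singleton]
    have hd := map_dvd (MvPolynomial.bind₁ τ) (hE2 hq)
    rwa [MvPolynomial.bind₁_X_right, hτ, Matrix.cons_val_zero] at hd
  · intro k l
    have hprod : (∏ γ ∈ Finset.range (k - (fun _ : Fin m => 0) j),
        (Polynomial.C (l - (∑ j' ∈ Finset.univ.filter (fun j' => j < j'),
          (((fun _ : Fin m => 0) j' : ℕ) : ℝ)) + (γ : ℝ) + 1 / 2) * Polynomial.X + 1))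
        = Pb k (l + 1 / 2) := by
      refine Finset.prod_congr (by simp) fun γ _ => ?_
      rw [show l - (∑ j' ∈ Finset.univ.filter (fun j' => j < j'),
          (((fun _ : Fin m => 0) j' : ℕ) : ℝ)) + (γ : ℝ) + 1 / 2
        = l + 1 / 2 + (γ : ℝ) by simp; ring]
    rw [hprod, hE3]
    have hbind : MvPolynomial.eval ![(k : ℝ), l] (MvPolynomial.bind₁ τ E)
        = MvPolynomial.eval (fun v => MvPolynomial.eval ![(k : ℝ), l] (τ v)) E :=
      MvPolynomial.eval₂Hom_bind₁ (RingHom.id ℝ) _ τ E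
    have hvec : (fun v => MvPolynomial.eval ![(k : ℝ), l] (τ v))
        = ![(k : ℝ), l + 1 / 2] := by
      funext v
      fin_cases v
      · show MvPolynomial.eval ![(k : ℝ), l] (τ 0) = _
        rw [hτ]; simp
      · show MvPolynomial.eval ![(k : ℝ), l] (τ 1) = _
        rw [hτ]; simp
    rw [hbind, hvec]

/-- `R_p(k,l,i₁,…,i_m) = [ℏ^p] R(ℏ;k,l,i₁,…,i_m)` is a polynomial in
`k, l, i₁, …, i_m` of total degree at most `2p`, and for `p ≥ 1` the specialization
`R_p(k,l,0,…,0)` is divisible by `k` as a polynomial in `k` and `l`. -/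
theorem Rp_polynomial (m p : ℕ) (hm : 1 ≤ m) :
    (∃ Q : MvPolynomial (Fin (m + 2)) ℝ, Q.totalDegree ≤ 2 * p ∧
      ∀ (k : ℕ) (l : ℝ) (i : Fin m → ℕ), (∀ j, i j ≤ k) →
        (Rpoly m k l i).coeff p =
          MvPolynomial.eval
            (Fin.cons (k : ℝ) (Fin.cons l (fun j : Fin m => (i j : ℝ)))) Q) ∧
    (1 ≤ p → ∃ Q₂ : MvPolynomial (Fin 2) ℝ,
      ∀ (k : ℕ) (l : ℝ),
        (Rpoly m k l (fun _ => 0)).coeff p = (k : ℝ) * MvPolynomial.eval ![(k : ℝ), l] Q₂) := by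
  constructor
  · obtain ⟨Q, hQ1, -, hQ3⟩ := keyProd
      (A := ℕ × ℝ × (Fin m → ℕ))
      (fun a => Fin.cons (a.1 : ℝ) (Fin.cons a.2.1 fun j' => (a.2.2 j' : ℝ)))
      (fun a => ∀ j', a.2.2 j' ≤ a.1)
      (fun j a => ∏ γ ∈ Finset.range (a.1 - a.2.2 j),
        (Polynomial.C (a.2.1 - (∑ j' ∈ Finset.univ.filter (fun j' => j < j'), (a.2.2 j' : ℝ))
          + (γ : ℝ) + 1 / 2) * Polynomial.X + 1))
      ⊤ Finset.univ
      (fun j _ q => by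
        obtain ⟨E', h1, h2⟩ := block1 j q
        exact ⟨E', h1, fun _ => trivial, fun a ha => h2 a.1 a.2.1 a.2.2 ha⟩) p
    exact ⟨Q, hQ1, fun k l i h => hQ3 (k, l, i) h⟩
  · intro hp
    obtain ⟨Q, hQ1, hQ2, hQ3⟩ := keyProd
      (A := ℕ × ℝ)
      (fun a => ![(a.1 : ℝ), a.2])
      (fun _ => True)
      (fun j a => ∏ γ ∈ Finset.range (a.1 - (fun _ : Fin m => 0) j),
        (Polynomial.C (a.2 - (∑ j' ∈ Finset.univ.filter (fun j' => j < j'),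
            (((fun _ : Fin m => 0) j' : ℕ) : ℝ)) + (γ : ℝ) + 1 / 2) * Polynomial.X + 1))
      (Ideal.span {(MvPolynomial.X 0 : MvPolynomial (Fin 2) ℝ)}) Finset.univ
      (fun j _ q => by
        obtain ⟨E', h1, h2, h3⟩ := block2 j q
        exact ⟨E', h1, h2, fun a _ => h3 a.1 a.2⟩) p
    have hdvd : (MvPolynomial.X 0 : MvPolynomial (Fin 2) ℝ) ∣ Q :=
      Ideal.mem_span_singleton.mp (hQ2 hp)
    obtain ⟨Q₂, hQ₂⟩ := hdvd
    refine ⟨Q₂, fun k l => ?_⟩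
    have := hQ3 (k, l) trivial
    rw [show (∏ j ∈ Finset.univ, ∏ γ ∈ Finset.range (k - (fun _ : Fin m => 0) j),
        (Polynomial.C (l - (∑ j' ∈ Finset.univ.filter (fun j' => j < j'),
            (((fun _ : Fin m => 0) j' : ℕ) : ℝ)) + (γ : ℝ) + 1 / 2) * Polynomial.X + 1))
      = Rpoly m k l (fun _ => 0) from rfl] at this
    rw [this, hQ₂, map_mul, MvPolynomial.eval_X]
    simp
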